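/- arXiv:1910.06435 — 6 statements merged into one kernel-verified Lean document; each statement's English description precedes it below -/
import Mathlib

section
/- For any finite graph G = (V,E), there exists a family of at most |E|+1 clusterings such that for every λ ∈ (0,1), the family contains a clustering minimizing the LambdaPrime objective at λ. -/
/-!
Rewrite `lamPrime G C λ` as `k(C) + λ · b(C)`, where `k(C)` is the number of edges of `G` between
different clusters and `b(C)` the number of pairs inside clusters. Since `k(C) ∈ {0, …, |E|}`,
keeping for each value `k` one clustering that minimizes `b` among those with `k(C) = k` gives at
most `|E| + 1` clusterings, and for `λ ≥ 0` each global minimizer can be exchanged for the kept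
clustering with the same `k`.
-/

open Finset

def SimpleGraph.cutVal {V : Type*} [Fintype V] [DecidableEq V]
    (G : SimpleGraph V) [DecidableRel G.Adj] (S : Finset V) : ℕ :=
  ((univ : Finset (V × V)).filter
    (fun p => G.Adj p.1 p.2 ∧ p.1 ∈ S ∧ p.2 ∉ S)).card

noncomputable def lamPrime {V : Type*} [Fintype V] [DecidableEq V]
    (G : SimpleGraph V) [DecidableRel G.Adj]
    (C : Finpartition (univ : Finset V)) (lam : ℝ) : ℝ :=
  ∑ S ∈ C.parts, ((G.cutVal S : ℝ) / 2 + lam * (S.card.choose 2))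

theorem exists_finset_card_le_forall_exists_min {α ι β γ : Type*} [Fintype α] [Nonempty α]
    [DecidableEq α] [LinearOrder β] [LinearOrder γ]
    (a : α → ι) (s : Finset ι) (ha : ∀ x, a x ∈ s) (b : α → β) :
    ∃ F : Finset α, #F ≤ #s ∧ ∀ f : α → γ, (∀ x y, a x = a y → b x ≤ b y → f x ≤ f y) →
      ∃ x ∈ F, ∀ y, f x ≤ f y := by
  classical
  have exists_rep : ∀ i : ι, ∃ r : α, ∀ x, a x = i → a r = i ∧ ∀ y, a y = i → b r ≤ b y := by
    intro i
    by_cases hi : ∃ x, a x = i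
    · obtain ⟨r, hr, hmin⟩ := exists_min_image {x | a x = i} b
        (hi.imp fun x hx => mem_filter.2 ⟨mem_univ x, hx⟩)
      exact ⟨r, fun _ _ => ⟨(mem_filter.1 hr).2, fun y hy => hmin y (by simpa using hy)⟩⟩
    · exact ⟨Classical.arbitrary α, fun x hx => (hi ⟨x, hx⟩).elim⟩
  choose rep hrep using exists_rep
  refine ⟨s.image rep, card_image_le, fun f hf => ?_⟩
  obtain ⟨m, hm⟩ := Finite.exists_min f
  obtain ⟨hrep_a, hrep_b⟩ := hrep (a m) m rfl
  exact ⟨rep (a m), mem_image_of_mem rep (ha m),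
    fun y => (hf _ _ hrep_a (hrep_b m rfl)).trans (hm y)⟩

namespace SimpleGraph

variable {V : Type*} [Fintype V] [DecidableEq V] (G : SimpleGraph V) [DecidableRel G.Adj]

def cutGraph (C : Finpartition (univ : Finset V)) : SimpleGraph V where
  Adj u v := G.Adj u v ∧ C.part u ≠ C.part v
  symm := ⟨fun _ _ h => ⟨h.1.symm, h.2.symm⟩⟩
  loopless := ⟨fun _ h => G.irrefl h.1⟩

instance (C : Finpartition (univ : Finset V)) : DecidableRel (G.cutGraph C).Adj :=
  fun u v => inferInstanceAs (Decidable (G.Adj u v ∧ C.part u ≠ C.part v))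

theorem card_edgeFinset_cutGraph_le (C : Finpartition (univ : Finset V)) :
    #(G.cutGraph C).edgeFinset ≤ #G.edgeFinset :=
  card_le_card (edgeFinset_mono fun _ _ h => h.1)

theorem sum_cutVal_eq (C : Finpartition (univ : Finset V)) :
    ∑ S ∈ C.parts, G.cutVal S = 2 * #(G.cutGraph C).edgeFinset := by
  rw [two_mul_card_edgeFinset, card_eq_sum_card_fiberwise (f := fun p => C.part p.1)
    (t := C.parts) fun p _ => C.part_mem.2 (mem_univ p.1)]
  refine sum_congr rfl fun S hS => congrArg card ?_
  ext ⟨u, v⟩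
  simp only [mem_filter, mem_univ, true_and, C.part_eq_iff_mem hS]
  constructor
  · rintro ⟨hadj, huS, hvS⟩
    exact ⟨⟨hadj, fun h => hvS ((C.part_eq_iff_mem hS).1 (h ▸ C.part_eq_of_mem hS huS))⟩, huS⟩
  · rintro ⟨⟨hadj, hne⟩, huS⟩
    exact ⟨hadj, huS, fun hvS => hne (by rw [C.part_eq_of_mem hS huS, C.part_eq_of_mem hS hvS])⟩

theorem lamPrime_eq (C : Finpartition (univ : Finset V)) (lam : ℝ) :
    lamPrime G C lam =
      #(G.cutGraph C).edgeFinset + lam * ∑ S ∈ C.parts, ((#S).choose 2 : ℝ) := by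
  rw [lamPrime, sum_add_distrib, ← sum_div, ← mul_sum, ← Nat.cast_sum, sum_cutVal_eq]
  push_cast
  ring

end SimpleGraph

/-- There is a family of at most `|E| + 1` clusterings containing, for every
`λ ∈ (0,1)`, a clustering minimizing the LambdaPrime objective at `λ`. -/
theorem exists_small_optimal_family
    {V : Type*} [Fintype V] [DecidableEq V]
    (G : SimpleGraph V) [DecidableRel G.Adj] :
    ∃ F : Finset (Finpartition (univ : Finset V)),
      F.card ≤ G.edgeFinset.card + 1 ∧
      ∀ lam ∈ Set.Ioo (0 : ℝ) 1, ∃ C ∈ F,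
        ∀ C' : Finpartition (univ : Finset V),
          lamPrime G C lam ≤ lamPrime G C' lam := by
  obtain ⟨F, hF_card, hF_min⟩ := exists_finset_card_le_forall_exists_min (γ := ℝ)
    (fun C => #(G.cutGraph C).edgeFinset) (range (#G.edgeFinset + 1))
    (fun C => mem_range_succ_iff.2 (G.card_edgeFinset_cutGraph_le C))
    (fun C => ∑ S ∈ C.parts, ((#S).choose 2 : ℝ))
  refine ⟨F, by simpa using hF_card, fun lam hlam => hF_min _ fun C C' hcut hpairs => ?_⟩
  rw [G.lamPrime_eq, G.lamPrime_eq, hcut]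
  gcongr
  exact hlam.1.le
end

section
/- Let f(x,λ) = P(x) + λN(x) with P, N ≥ 0 over a feasible set F, let ε > 0, and suppose solutions x^1,...,x^{q+1} are optimal at λ_1 < λ_2 < ... < λ_{q+1} where λ_{k} = (1+ε)^2 λ_{k−1} for 2 ≤ k ≤ q. Then for any λ ∈ [λ_1, (1+ε)λ_q], some x^k is a (1+ε)-approximate solution at λ. -/
/-!
If `x` minimises `P + λ N` over `F` and `μ` lies within a factor `1 + ε` of `λ` (either side),
then `x` is a `(1 + ε)`-approximate minimiser of `P + μ N`: moving the weight from `λ` to `μ`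
costs at most a factor `1 + ε`, charged to `N (x)` when `μ > λ` and to `N (y)` when `μ < λ`.
Since consecutive parameters differ by the factor `(1 + ε)²`, every `μ` in the range lies
within a factor `1 + ε` of one of them.
-/

theorem add_mul_le_mul_of_minimizer_of_within_factor {X : Type*} {F : Set X} {P N : X → ℝ}
    (hP : ∀ z ∈ F, 0 ≤ P z) (hN : ∀ z ∈ F, 0 ≤ N z) {c lam μ : ℝ} (hc : 1 ≤ c)
    (hlam : lam ≤ c * μ) (hμ : μ ≤ c * lam) {x : X} (hx : x ∈ F)
    (hmin : ∀ y ∈ F, P x + lam * N x ≤ P y + lam * N y) :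
    ∀ y ∈ F, P x + μ * N x ≤ c * (P y + μ * N y) := by
  intro y hy
  have hPx := hP x hx
  have hNx := hN x hx
  have hPy := hP y hy
  have hNy := hN y hy
  rcases le_total lam μ with h | h
  · calc P x + μ * N x ≤ c * (P x + lam * N x) := by nlinarith
      _ ≤ c * (P y + lam * N y) := mul_le_mul_of_nonneg_left (hmin y hy) (by linarith)
      _ ≤ c * (P y + μ * N y) := by gcongr
  · calc P x + μ * N x ≤ P x + lam * N x := by gcongr
      _ ≤ P y + lam * N y := hmin y hy
      _ ≤ c * (P y + μ * N y) := by nlinarith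

theorem exists_within_factor_of_ratio_le_sq {lam : ℕ → ℝ} {c μ : ℝ} (hc : 0 < c) {n : ℕ}
    (hn : 1 ≤ n) (hratio : ∀ k, 1 ≤ k → k < n → lam (k + 1) ≤ c ^ 2 * lam k)
    (hlow : lam 1 ≤ c * μ) (hhigh : μ ≤ c * lam n) :
    ∃ k, 1 ≤ k ∧ k ≤ n ∧ lam k ≤ c * μ ∧ μ ≤ c * lam k := by
  induction n, hn using Nat.le_induction with
  | base => exact ⟨1, le_rfl, le_rfl, hlow, hhigh⟩
  | succ n hn ih =>
    by_cases hlast : lam (n + 1) ≤ c * μ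
    · exact ⟨n + 1, by omega, le_rfl, hlast, hhigh⟩
    · have hstep := hratio n hn (Nat.lt_succ_self n)
      have hμn : μ ≤ c * lam n := by
        by_contra! hlt
        have := mul_lt_mul_of_pos_left hlt hc
        nlinarith
      obtain ⟨k, hk1, hkn, hk⟩ :=
        ih (fun k hk1 hkn => hratio k hk1 (Nat.lt_succ_of_lt hkn)) hμn
      exact ⟨k, hk1, by omega, hk⟩

theorem geometric_family_covers_general {X : Type*} (F : Set X) (P N : X → ℝ)
    (hP : ∀ z ∈ F, 0 ≤ P z) (hN : ∀ z ∈ F, 0 ≤ N z)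
    (ε : ℝ) (hε : 0 < ε) (q : ℕ) (hq : 1 ≤ q)
    (lam : ℕ → ℝ) (x : ℕ → X)
    (hpos : 0 < lam 1)
    (hgeom : ∀ k, 2 ≤ k → k ≤ q → lam k = (1 + ε) ^ 2 * lam (k - 1))
    (hmem : ∀ k, 1 ≤ k → k ≤ q + 1 → x k ∈ F)
    (hopt : ∀ k, 1 ≤ k → k ≤ q + 1 →
      ∀ y ∈ F, P (x k) + lam k * N (x k) ≤ P y + lam k * N y) :
    ∀ μ ∈ Set.Icc (lam 1) ((1 + ε) * lam q),
      ∃ k, 1 ≤ k ∧ k ≤ q + 1 ∧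
        ∀ y ∈ F, P (x k) + μ * N (x k) ≤ (1 + ε) * (P y + μ * N y) := by
  rintro μ ⟨hμlow, hμhigh⟩
  have hratio : ∀ k, 1 ≤ k → k < q → lam (k + 1) ≤ (1 + ε) ^ 2 * lam k := fun k hk1 hkq =>
    (hgeom (k + 1) (by omega) hkq).le
  have hlow : lam 1 ≤ (1 + ε) * μ := by nlinarith
  obtain ⟨k, hk1, hkq, hk⟩ :=
    exists_within_factor_of_ratio_le_sq (by linarith) hq hratio hlow hμhigh
  exact ⟨k, hk1, by omega, add_mul_le_mul_of_minimizer_of_within_factor hP hN (by linarith)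
    hk.1 hk.2 (hmem k hk1 (by omega)) (hopt k hk1 (by omega))⟩

/-- Given optimal solutions `x 1, …, x (q+1)` at geometrically spaced parameters
`lam 1 < ⋯ < lam (q+1)` with ratio `(1+ε)²` between consecutive parameters up to
index `q`, every `μ ∈ [lam 1, (1+ε)·lam q]` admits some `x k` that is a
`(1+ε)`-approximate solution at `μ`. -/
theorem geometric_family_covers {X : Type*} (F : Set X) (P N : X → ℝ)
    (hP : ∀ z ∈ F, 0 ≤ P z) (hN : ∀ z ∈ F, 0 ≤ N z)
    (ε : ℝ) (hε : 0 < ε) (q : ℕ) (hq : 1 ≤ q)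
    (lam : ℕ → ℝ) (x : ℕ → X)
    (hpos : 0 < lam 1)
    (hmono : ∀ k, 1 ≤ k → k ≤ q → lam k < lam (k + 1))
    (hgeom : ∀ k, 2 ≤ k → k ≤ q → lam k = (1 + ε) ^ 2 * lam (k - 1))
    (hmem : ∀ k, 1 ≤ k → k ≤ q + 1 → x k ∈ F)
    (hopt : ∀ k, 1 ≤ k → k ≤ q + 1 →
      ∀ y ∈ F, P (x k) + lam k * N (x k) ≤ P y + lam k * N y) :
    ∀ μ ∈ Set.Icc (lam 1) ((1 + ε) * lam q),
      ∃ k, 1 ≤ k ∧ k ≤ q + 1 ∧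
        ∀ y ∈ F, P (x k) + μ * N (x k) ≤ (1 + ε) * (P y + μ * N y) :=
  geometric_family_covers_general F P N hP hN ε hε q hq lam x hpos hgeom hmem hopt
end

section
/- For any graph G, if λ ≤ λ* where λ* is the scaled sparsest cut value, then the clustering placing all nodes in a single cluster minimizes the LambdaPrime objective at λ. -/
open Finset

/-!
For a clustering `C` of the `n` vertices, the pairs of vertices split into the pairs inside a
cluster and the pairs separated by it, so `n.choose 2 = ∑ S ∈ C, (#S.choose 2 + #S * #Sᶜ / 2)`.
Hence the single cluster costs `λ · n.choose 2 = LamPrime(C, λ) + ∑ S ∈ C, (λ #S #Sᶜ - cut S) / 2`,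
and every summand of the last sum is `≤ 0` because `λ` is at most the sparsest cut value.
-/

theorem Finpartition.cast_choose_two_card_eq_sum_parts {α : Type*} [DecidableEq α]
    {s : Finset α} (P : Finpartition s) :
    ((#s).choose 2 : ℝ) = ∑ S ∈ P.parts, (((#S).choose 2 : ℝ) + #S * #(s \ S) / 2) := by
  have hsum : ∑ S ∈ P.parts, (#S : ℝ) = #s := by exact_mod_cast P.sum_card_parts
  have hpart : ∀ S ∈ P.parts, ((#S).choose 2 : ℝ) + #S * #(s \ S) / 2 = #S * (#s - 1) / 2 := by
    intro S hS
    have hsub : S ⊆ s := P.le hS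
    rw [Nat.cast_choose_two, card_sdiff_of_subset hsub, Nat.cast_sub (card_le_card hsub)]
    ring
  rw [sum_congr rfl hpart, ← sum_div, ← sum_mul, hsum, Nat.cast_choose_two]

section

variable {V : Type*} [Fintype V] [DecidableEq V] (G : SimpleGraph V) [DecidableRel G.Adj]

@[simp]
theorem SimpleGraph.cutVal_univ : G.cutVal univ = 0 := by
  simp [SimpleGraph.cutVal]

theorem lamPrime_indiscrete (h : (univ : Finset V) ≠ ⊥) (lam : ℝ) :
    lamPrime G (Finpartition.indiscrete h) lam = lam * (Fintype.card V).choose 2 := by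
  simp [lamPrime, Finpartition.indiscrete]

theorem SimpleGraph.mul_card_mul_card_sdiff_le_cutVal {lam : ℝ}
    (hlam : ∀ S : Finset V, S.Nonempty → S ≠ univ →
      lam ≤ (G.cutVal S : ℝ) / (#S * #(univ \ S))) (S : Finset V) (hS : S.Nonempty) :
    lam * (#S * #(univ \ S)) ≤ G.cutVal S := by
  by_cases hSu : S = univ
  · simp [hSu]
  · have hSc : (univ \ S).Nonempty := sdiff_nonempty.2 fun h => hSu (univ_subset_iff.1 h)
    have hpos : (0 : ℝ) < #S * #(univ \ S) := by
      have := hS.card_pos; have := hSc.card_pos; positivity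
    exact (le_div_iff₀ hpos).1 (hlam S hS hSu)

end

/-- If `λ` is at most the scaled sparsest cut value, then the clustering placing
all nodes in a single cluster minimizes the LambdaPrime objective at `λ`. -/
theorem indiscrete_optimal_of_le_sparsest_cut
    {V : Type*} [Fintype V] [DecidableEq V] [Nonempty V]
    (G : SimpleGraph V) [DecidableRel G.Adj] (lam : ℝ)
    (hlam : ∀ S : Finset V, S.Nonempty → S ≠ univ →
      lam ≤ (G.cutVal S : ℝ) / (S.card * (univ \ S).card)) :
    ∀ C : Finpartition (univ : Finset V),
      lamPrime G (Finpartition.indiscrete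
        (by simpa using (univ_nonempty (α := V)).ne_empty)) lam ≤
        lamPrime G C lam := by
  intro C
  rw [lamPrime_indiscrete, ← card_univ, C.cast_choose_two_card_eq_sum_parts, mul_sum, lamPrime]
  refine sum_le_sum fun S hS => ?_
  have hcut := G.mul_card_mul_card_sdiff_le_cutVal hlam S (C.nonempty_of_mem_parts hS)
  linarith
end

section
/- Define LP(λ) = min over positive integers t of (n/t)(1 + λ·binom(t,2)) and g(λ) = n(√(2λ) − λ/2). Then for n = 2^k with k ≥ 3 and every λ ∈ [8/n², 1/2], g(λ) ≤ LP(λ) ≤ √2·g(λ). -/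
/-!
Writing `h(t) = (n/t)(1 + λ·binom(t,2)) = n(1/t + λt/2 − λ/2)`, AM–GM gives `1/t + λt/2 ≥ √(2λ)`
for every `t > 0`, hence the lower bound. For the upper bound take `t = ⌈2/s⌉` with `s = √(2λ)`:
then `1/t ≤ s/2` and `λt/2 < s/2 + λ/2`, so `h(t) ≤ n s`, and `s ≤ √2 (s − λ/2)` as long as
`s ≤ 1`, i.e. `λ ≤ 1/2`.
-/

/-- The LambdaPrime LP relaxation value on the ring graph with `n` nodes:
`LP(λ) = min_{t ∈ ℕ, t ≥ 1} (n/t)(1 + λ·binom(t,2))`. -/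
noncomputable def ringLP (n : ℕ) (lam : ℝ) : ℝ :=
  sInf {y : ℝ | ∃ t : ℕ, 1 ≤ t ∧ y = ((n : ℝ) / t) * (1 + lam * (t.choose 2))}

/-- The paper's `h_λ(t)`. -/
noncomputable def ringCost (n : ℕ) (lam : ℝ) (t : ℕ) : ℝ :=
  ((n : ℝ) / t) * (1 + lam * (t.choose 2))

lemma ringCost_eq (n : ℕ) (lam : ℝ) {t : ℕ} (ht : t ≠ 0) :
    ringCost n lam t = n * (1 / t + lam * t / 2 - lam / 2) := by
  have ht' : (t : ℝ) ≠ 0 := Nat.cast_ne_zero.mpr ht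
  rw [ringCost, Nat.cast_choose_two]
  field_simp
  ring

lemma ringCost_nonneg (n : ℕ) {lam : ℝ} (hlam : 0 ≤ lam) (t : ℕ) : 0 ≤ ringCost n lam t := by
  unfold ringCost
  positivity

lemma le_ringLP (n : ℕ) (lam : ℝ) {b : ℝ} (hb : ∀ t : ℕ, 1 ≤ t → b ≤ ringCost n lam t) :
    b ≤ ringLP n lam :=
  le_csInf ⟨ringCost n lam 1, 1, le_rfl, rfl⟩ (by rintro _ ⟨t, ht, rfl⟩; exact hb t ht)

lemma ringLP_le_ringCost (n : ℕ) {lam : ℝ} (hlam : 0 ≤ lam) {t : ℕ} (ht : 1 ≤ t) :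
    ringLP n lam ≤ ringCost n lam t :=
  csInf_le ⟨0, by rintro _ ⟨t, -, rfl⟩; exact ringCost_nonneg n hlam t⟩ ⟨t, ht, rfl⟩

lemma sqrt_two_mul_le_inv_add_mul_div_two {lam t : ℝ} (hlam : 0 ≤ lam) (ht : 0 < t) :
    √(2 * lam) ≤ 1 / t + lam * t / 2 := by
  set s := √(2 * lam)
  have hs : s ^ 2 = 2 * lam := Real.sq_sqrt (by positivity)
  have hgap : 1 / t + lam * t / 2 - s = (1 - s * t / 2) ^ 2 / t := by
    field_simp
    nlinarith
  have : 0 ≤ (1 - s * t / 2) ^ 2 / t := by positivity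
  linarith

lemma mul_sqrt_sub_le_ringCost (n : ℕ) {lam : ℝ} (hlam : 0 ≤ lam) {t : ℕ} (ht : 1 ≤ t) :
    n * (√(2 * lam) - lam / 2) ≤ ringCost n lam t := by
  have ht' : (0 : ℝ) < t := by exact_mod_cast ht
  rw [ringCost_eq n lam (by omega)]
  gcongr
  linarith [sqrt_two_mul_le_inv_add_mul_div_two hlam ht']

lemma exists_ringCost_le_mul_sqrt (n : ℕ) {lam : ℝ} (hlam : 0 < lam) :
    ∃ t : ℕ, 1 ≤ t ∧ ringCost n lam t ≤ n * √(2 * lam) := by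
  set s := √(2 * lam)
  have hs : 0 < s := Real.sqrt_pos.mpr (by positivity)
  have hs2 : s ^ 2 = 2 * lam := Real.sq_sqrt (by positivity)
  set t := ⌈2 / s⌉₊
  have ht_ge : 2 / s ≤ t := Nat.le_ceil _
  have ht_lt : (t : ℝ) < 2 / s + 1 := Nat.ceil_lt_add_one (by positivity)
  have ht_pos : (0 : ℝ) < t := lt_of_lt_of_le (by positivity) ht_ge
  refine ⟨t, by exact_mod_cast ht_pos, ?_⟩
  rw [ringCost_eq n lam (by exact_mod_cast ht_pos.ne')]
  gcongr
  have hinv : 1 / (t : ℝ) ≤ s / 2 := by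
    rw [div_le_iff₀ ht_pos]
    rw [div_le_iff₀ hs] at ht_ge
    linarith
  have hlin : lam * t / 2 ≤ s / 2 + lam / 2 := by
    have h := mul_le_mul_of_nonneg_left ht_lt.le hlam.le
    have hexp : lam * (2 / s + 1) = s + lam := by
      field_simp
      nlinarith
    linarith
  linarith

lemma sqrt_two_mul_le_sqrt_two_mul_sub {lam : ℝ} (hlam : 0 ≤ lam) (hlam' : lam ≤ 1 / 2) :
    √(2 * lam) ≤ √2 * (√(2 * lam) - lam / 2) := by
  set s := √(2 * lam)
  have hs : 0 ≤ s := Real.sqrt_nonneg _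
  have hs2 : s ^ 2 = 2 * lam := Real.sq_sqrt (by positivity)
  have hs1 : s ≤ 1 := Real.sqrt_le_one.mpr (by linarith)
  have hb2 : √2 ^ 2 = 2 := Real.sq_sqrt (by norm_num)
  have hb : (4 : ℝ) / 3 ≤ √2 := by nlinarith [Real.sqrt_nonneg 2]
  -- `√2 (s − s²/4) ≥ (4/3)(3s/4) = s` for `0 ≤ s ≤ 1`.
  nlinarith [mul_nonneg (sub_nonneg.mpr hb) (mul_nonneg hs (by linarith : (0 : ℝ) ≤ 4 - s))]

theorem ringLP_between_g_and_sqrt2_g_general (n k : ℕ) (hn : n = 2 ^ k)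
    (lam : ℝ) (hlam : lam ∈ Set.Icc ((8 : ℝ) / (n : ℝ) ^ 2) (1 / 2)) :
    (n : ℝ) * (Real.sqrt (2 * lam) - lam / 2) ≤ ringLP n lam ∧
      ringLP n lam ≤ Real.sqrt 2 * ((n : ℝ) * (Real.sqrt (2 * lam) - lam / 2)) := by
  obtain ⟨hlo, hhi⟩ := hlam
  have hlam_pos : 0 < lam := lt_of_lt_of_le (by rw [hn]; positivity) hlo
  refine ⟨le_ringLP n lam fun t ht => mul_sqrt_sub_le_ringCost n hlam_pos.le ht, ?_⟩
  obtain ⟨t, ht, hcost⟩ := exists_ringCost_le_mul_sqrt n hlam_pos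
  calc ringLP n lam ≤ ringCost n lam t := ringLP_le_ringCost n hlam_pos.le ht
    _ ≤ n * √(2 * lam) := hcost
    _ ≤ n * (√2 * (√(2 * lam) - lam / 2)) :=
      by gcongr; exact sqrt_two_mul_le_sqrt_two_mul_sub hlam_pos.le hhi
    _ = √2 * (n * (√(2 * lam) - lam / 2)) := by ring

/-- For `n = 2^k`, `k ≥ 3`, and `λ ∈ [8/n², 1/2]`,
`g(λ) ≤ LP(λ) ≤ √2·g(λ)` where `g(λ) = n(√(2λ) − λ/2)`. -/
theorem ringLP_between_g_and_sqrt2_g (n k : ℕ) (hn : n = 2 ^ k) (hk : 3 ≤ k)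
    (lam : ℝ) (hlam : lam ∈ Set.Icc ((8 : ℝ) / (n : ℝ) ^ 2) (1 / 2)) :
    (n : ℝ) * (Real.sqrt (2 * lam) - lam / 2) ≤ ringLP n lam ∧
      ringLP n lam ≤ Real.sqrt 2 * ((n : ℝ) * (Real.sqrt (2 * lam) - lam / 2)) :=
  ringLP_between_g_and_sqrt2_g_general n k hn lam hlam
end

section
/- Let λ_i = 2/2^{2(k−i)} for i = 1,...,k−1 where n = 2^k. Then t_i := √(2/λ_i) = 2^{k−i} is a positive integer dividing n, and consequently the LP value LP(λ_i) = min over positive integers t of (n/t)(1+λ_i·binom(t,2)) equals g(λ_i) = n(√(2λ_i) − λ_i/2). -/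
/-!
Writing the objective as `n/t + nλt/2 − nλ/2`, AM–GM gives `1/t + λt/2 ≥ √(2λ)` for every real
`t > 0`, so `g(λ)` is a lower bound for the objective, with equality exactly at `t = √(2/λ)`.
For `λ_i` this real minimizer is the integer `2^{k−i}`, hence the infimum over integers `t ≥ 1`
is attained there and equals `g(λ_i)`.
-/

open Real

theorem g_le_ringLP_objective {n lam t : ℝ} (hn : 0 ≤ n) (hlam : 0 ≤ lam) (ht : 0 < t) :
    n * (√(2 * lam) - lam / 2) ≤ n / t * (1 + lam * (t * (t - 1) / 2)) := by
  set s := √(2 * lam)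
  have hs : s ^ 2 = 2 * lam := sq_sqrt (by positivity)
  have hgap : n / t * (1 + lam * (t * (t - 1) / 2)) - n * (s - lam / 2)
      = n * (s * t - 2) ^ 2 / (4 * t) := by
    field_simp
    linear_combination (-2 * n * t ^ 2) * hs
  have : 0 ≤ n * (s * t - 2) ^ 2 / (4 * t) := by positivity
  linarith

theorem ringLP_objective_eq_g_of_mul_sq_eq_two {n lam t : ℝ} (ht : 0 < t) (h : lam * t ^ 2 = 2) :
    n / t * (1 + lam * (t * (t - 1) / 2)) = n * (√(2 * lam) - lam / 2) := by
  have hlam : lam = 2 / t ^ 2 := by field_simp; linarith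
  have hsqrt : √(2 * lam) = 2 / t := by
    rw [show 2 * lam = (2 / t) ^ 2 by rw [hlam]; ring]
    exact sqrt_sq (by positivity)
  rw [hsqrt, hlam]
  field_simp
  ring

theorem ringLP_eq_of_mul_sq_eq_two (n t : ℕ) (ht : 1 ≤ t) {lam : ℝ} (h : lam * t ^ 2 = 2) :
    ringLP n lam = n * (√(2 * lam) - lam / 2) := by
  have htpos : (0 : ℝ) < t := by exact_mod_cast ht
  have hlam : 0 ≤ lam := by
    rw [show lam = 2 / (t : ℝ) ^ 2 by field_simp; linarith]
    positivity
  refine IsLeast.csInf_eq ⟨⟨t, ht, ?_⟩, ?_⟩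
  · rw [Nat.cast_choose_two, ringLP_objective_eq_g_of_mul_sq_eq_two htpos h]
  · rintro y ⟨s, hs, rfl⟩
    rw [Nat.cast_choose_two]
    exact g_le_ringLP_objective n.cast_nonneg hlam (by exact_mod_cast hs)

theorem special_lambda_LP_eq_g_general (k i : ℕ) :
    Real.sqrt (2 / ((2 : ℝ) / 4 ^ (k - i))) = (2 : ℝ) ^ (k - i) ∧
    (2 ^ (k - i) : ℕ) ∣ 2 ^ k ∧
    ringLP (2 ^ k) ((2 : ℝ) / 4 ^ (k - i)) =
      ((2 : ℝ) ^ k) * (Real.sqrt (2 * ((2 : ℝ) / 4 ^ (k - i))) -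
        ((2 : ℝ) / 4 ^ (k - i)) / 2) := by
  set m := k - i
  have h4 : (4 : ℝ) ^ m = ((2 : ℝ) ^ m) ^ 2 := by
    rw [← pow_mul, mul_comm, pow_mul]
    norm_num
  refine ⟨?_, pow_dvd_pow 2 (Nat.sub_le k i), ?_⟩
  · rw [div_div_cancel₀ two_ne_zero, h4]
    exact sqrt_sq (by positivity)
  · have hlam : (2 : ℝ) / 4 ^ m * ((2 ^ m : ℕ) : ℝ) ^ 2 = 2 := by
      push_cast
      rw [← h4]
      field_simp
    simpa using ringLP_eq_of_mul_sq_eq_two (2 ^ k) (2 ^ m) Nat.one_le_two_pow hlam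

/-- For `λ_i = 2/4^{k−i}` with `1 ≤ i ≤ k−1` and `n = 2^k`, the real minimizer
`t_i = √(2/λ_i)` equals the positive integer `2^{k−i}`, which divides `n`, and
consequently `LP(λ_i) = g(λ_i) = n(√(2λ_i) − λ_i/2)`. -/
theorem special_lambda_LP_eq_g (k i : ℕ) (hk : 3 ≤ k) (hi1 : 1 ≤ i) (hi2 : i ≤ k - 1) :
    Real.sqrt (2 / ((2 : ℝ) / 4 ^ (k - i))) = (2 : ℝ) ^ (k - i) ∧
    (2 ^ (k - i) : ℕ) ∣ 2 ^ k ∧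
    ringLP (2 ^ k) ((2 : ℝ) / 4 ^ (k - i)) =
      ((2 : ℝ) ^ k) * (Real.sqrt (2 * ((2 : ℝ) / 4 ^ (k - i))) -
        ((2 : ℝ) / 4 ^ (k - i)) / 2) :=
  special_lambda_LP_eq_g_general k i
end

section
/- Let λ_i = 2/4^{k−i} and t_i = 2^{k−i} as above, with λ ∈ [λ_i, 2λ_i). Then the LP objective with t = t_i satisfies (n/t_i)(1 + λ·binom(t_i,2)) ≤ √2·g(λ), where g(λ) = n(√(2λ) − λ/2). -/
/-!
With `u = t √λ ∈ [√2, 2]`, multiplying the inequality through by `2t² / n` turns it into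
`t (u² - 4u + 2) + (√2 - 1) u² ≤ 0`. The quadratic `u² - 4u + 2` is nonpositive on
`[2 - √2, 2 + √2] ⊇ [√2, 2]`, so the left side only grows as `t` decreases to `1`, where it
becomes `√2 u² - 4u + 2`, a convex function that is negative at both `u = √2` and `u = 2`.
-/

open Real

lemma mul_quadratic_add_le_zero {t u : ℝ} (ht : 1 ≤ t) (hu : √2 ≤ u) (hu' : u ≤ 2) :
    t * (u ^ 2 - 4 * u + 2) + (√2 - 1) * u ^ 2 ≤ 0 := by
  have hsq : √2 ^ 2 = 2 := sq_sqrt zero_le_two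
  have hone : 1 ≤ √2 := by nlinarith [sqrt_nonneg 2]
  have hq : u ^ 2 - 4 * u + 2 ≤ 0 := by
    nlinarith [mul_nonneg (sub_nonneg.2 hu) (sub_nonneg.2 hu'),
      mul_nonneg (by linarith : (0 : ℝ) ≤ 2 - √2) (sub_nonneg.2 hu)]
  have hat_one : √2 * u ^ 2 - 4 * u + 2 ≤ 0 := by
    nlinarith [mul_nonneg (sqrt_nonneg 2) (mul_nonneg (sub_nonneg.2 hu) (sub_nonneg.2 hu'))]
  nlinarith [mul_le_mul_of_nonpos_right ht hq]

lemma div_mul_one_add_le_sqrt_two_mul {n t lam : ℝ} (hn : 0 ≤ n) (ht : 1 ≤ t)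
    (hlow : 2 ≤ lam * t ^ 2) (hhigh : lam * t ^ 2 ≤ 4) :
    n / t * (1 + lam * (t * (t - 1) / 2)) ≤ √2 * (n * (√(2 * lam) - lam / 2)) := by
  have ht0 : 0 < t := by linarith
  have hlam : 0 ≤ lam := by nlinarith
  set s := √lam
  have hs : s ^ 2 = lam := sq_sqrt hlam
  have hs0 : 0 ≤ s := sqrt_nonneg lam
  have hsqrt2 : √(2 * lam) = √2 * s := sqrt_mul zero_le_two lam
  have hu2 : (t * s) ^ 2 = lam * t ^ 2 := by rw [← hs]; ring
  have hu : √2 ≤ t * s := by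
    rw [← sqrt_sq (mul_nonneg ht0.le hs0)]
    exact sqrt_le_sqrt (hu2 ▸ hlow)
  have hu' : t * s ≤ 2 := by nlinarith [mul_nonneg ht0.le hs0]
  have hquad := mul_quadratic_add_le_zero ht hu hu'
  have hmul_t : 1 + lam * (t * (t - 1) / 2) ≤ t * (√2 * (√(2 * lam) - lam / 2)) := by
    have hsq : √2 ^ 2 = 2 := sq_sqrt zero_le_two
    rw [hsqrt2, ← hs]
    refine le_of_mul_le_mul_left ?_ (by positivity : 0 < 2 * t)
    linear_combination hquad - 2 * t ^ 2 * s * hsq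
  rw [div_mul_eq_mul_div, div_le_iff₀ ht0]
  nlinarith [mul_le_mul_of_nonneg_left hmul_t hn]

theorem LP_objective_at_ti_le_sqrt2_g_general (k i : ℕ) (lam : ℝ)
    (hlam : lam ∈ Set.Ico ((2 : ℝ) / 4 ^ (k - i)) (2 * ((2 : ℝ) / 4 ^ (k - i)))) :
    ((2 : ℝ) ^ k / (2 : ℝ) ^ (k - i)) *
        (1 + lam * ((2 : ℝ) ^ (k - i) * ((2 : ℝ) ^ (k - i) - 1) / 2)) ≤
      Real.sqrt 2 * (((2 : ℝ) ^ k) * (Real.sqrt (2 * lam) - lam / 2)) := by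
  have h4 : (4 : ℝ) ^ (k - i) = ((2 : ℝ) ^ (k - i)) ^ 2 := by
    rw [show (4 : ℝ) = 2 ^ 2 by norm_num, ← pow_mul, ← pow_mul, mul_comm]
  have hpos : (0 : ℝ) < ((2 : ℝ) ^ (k - i)) ^ 2 := by positivity
  obtain ⟨hlow, hhigh⟩ := hlam
  rw [h4, div_le_iff₀ hpos] at hlow
  rw [h4, ← mul_div_assoc, lt_div_iff₀ hpos] at hhigh
  exact div_mul_one_add_le_sqrt_two_mul (by positivity) (one_le_pow₀ one_le_two) (by linarith)
    (by linarith)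

/-- For `n = 2^k`, `1 ≤ i ≤ k−2`, `λ_i = 2/4^{k−i}`, `t_i = 2^{k−i}`, and
`λ ∈ [λ_i, 2λ_i)`, the LP objective with `t = t_i` satisfies
`(n/t_i)(1 + λ·t_i(t_i−1)/2) ≤ √2·g(λ)` where `g(λ) = n(√(2λ) − λ/2)`. -/
theorem LP_objective_at_ti_le_sqrt2_g (k i : ℕ) (hk : 3 ≤ k)
    (hi1 : 1 ≤ i) (hi2 : i ≤ k - 2) (lam : ℝ)
    (hlam : lam ∈ Set.Ico ((2 : ℝ) / 4 ^ (k - i)) (2 * ((2 : ℝ) / 4 ^ (k - i)))) :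
    ((2 : ℝ) ^ k / (2 : ℝ) ^ (k - i)) *
        (1 + lam * ((2 : ℝ) ^ (k - i) * ((2 : ℝ) ^ (k - i) - 1) / 2)) ≤
      Real.sqrt 2 * (((2 : ℝ) ^ k) * (Real.sqrt (2 * lam) - lam / 2)) :=
  LP_objective_at_ti_le_sqrt2_g_general k i lam hlam
end
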